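/- With c(γ^ε) the lower-left entry of the normalized matrix of γ^ε = f^ε∘γ∘(f^ε)^{−1}, one has \dot c(γ)/c(γ) = [(\dot f_{zz}∘γ)γ' − \dot f_{zz}]/(γ''/γ') − (1/2)(\dot f_z∘γ + \dot f_z), provided c(γ) ≠ 0. -/

import Mathlib

open Complex ComplexConjugate

/-- Wirtinger derivative ∂/∂z. -/
noncomputable def wd (f : ℂ → ℂ) (z : ℂ) : ℂ :=
  (1/2 : ℂ) * (fderiv ℝ f z 1 - Complex.I * fderiv ℝ f z Complex.I)

/-- Wirtinger derivative ∂/∂z̄. -/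
noncomputable def wdb (f : ℂ → ℂ) (z : ℂ) : ℂ :=
  (1/2 : ℂ) * (fderiv ℝ f z 1 + Complex.I * fderiv ℝ f z Complex.I)
lemma wd_congr {f g : ℂ → ℂ} {z : ℂ} (h : f =ᶠ[nhds z] g) : wd f z = wd g z := by
  unfold wd; rw [Filter.EventuallyEq.fderiv_eq h]

lemma wd_const (a z : ℂ) : wd (fun _ => a) z = 0 := by
  simp [wd, fderiv_const]

lemma wd_id (z : ℂ) : wd (fun w => w) z = 1 := by
  have : fderiv ℝ (fun w : ℂ => w) z = ContinuousLinearMap.id ℝ ℂ := fderiv_id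
  simp only [wd, this, ContinuousLinearMap.id_apply]
  have : (I:ℂ) * I = -1 := by simp [Complex.I_mul_I]
  rw [this]; ring

lemma wd_mul {f g : ℂ → ℂ} {z : ℂ} (hf : DifferentiableAt ℝ f z)
    (hg : DifferentiableAt ℝ g z) :
    wd (fun w => f w * g w) z = wd f z * g z + f z * wd g z := by
  have h := fderiv_fun_mul (𝕜 := ℝ) hf hg
  unfold wd
  rw [h]
  simp only [ContinuousLinearMap.add_apply, ContinuousLinearMap.smul_apply, smul_eq_mul]
  ring

lemma wd_add {f g : ℂ → ℂ} {z : ℂ} (hf : DifferentiableAt ℝ f z)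
    (hg : DifferentiableAt ℝ g z) :
    wd (fun w => f w + g w) z = wd f z + wd g z := by
  unfold wd
  rw [fderiv_fun_add hf hg]
  simp only [ContinuousLinearMap.add_apply]
  ring

lemma wd_holo {f : ℂ → ℂ} {z : ℂ} (hf : DifferentiableAt ℂ f z) : wd f z = deriv f z := by
  have h : HasFDerivAt f ((fderiv ℂ f z).restrictScalars ℝ) z :=
    hf.hasFDerivAt.restrictScalars ℝ
  have h2 : fderiv ℝ f z = (fderiv ℂ f z).restrictScalars ℝ := h.fderiv
  have e1 : fderiv ℂ f z 1 = deriv f z := by rw [← toSpanSingleton_deriv]; simp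
  have eI : fderiv ℂ f z I = deriv f z * I := by
    calc fderiv ℂ f z I = fderiv ℂ f z (I • (1:ℂ)) := by rw [smul_eq_mul, mul_one]
    _ = I • fderiv ℂ f z 1 := map_smul _ _ _
    _ = deriv f z * I := by rw [e1, smul_eq_mul]; ring
  have h3 : (I:ℂ)*I = -1 := by simp [Complex.I_mul_I]
  unfold wd
  rw [h2]
  simp only [ContinuousLinearMap.coe_restrictScalars', e1, eI]
  linear_combination (-(1/2) * deriv f z) * h3

/-- chain rule, outer holomorphic -/
lemma wd_comp_outer {g u : ℂ → ℂ} {z : ℂ} (hg : DifferentiableAt ℂ g (u z))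
    (hu : DifferentiableAt ℝ u z) :
    wd (fun w => g (u w)) z = deriv g (u z) * wd u z := by
  have hgr : HasFDerivAt g ((fderiv ℂ g (u z)).restrictScalars ℝ) (u z) :=
    hg.hasFDerivAt.restrictScalars ℝ
  have hcomp := (hgr.comp z hu.hasFDerivAt).fderiv
  have e : ∀ v : ℂ, fderiv ℂ g (u z) v = deriv g (u z) * v := by
    intro v
    have e1 : fderiv ℂ g (u z) 1 = deriv g (u z) := by rw [← toSpanSingleton_deriv]; simp
    calc fderiv ℂ g (u z) v = fderiv ℂ g (u z) (v • (1:ℂ)) := by rw [smul_eq_mul, mul_one]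
    _ = v • fderiv ℂ g (u z) 1 := map_smul _ _ _
    _ = deriv g (u z) * v := by rw [e1, smul_eq_mul]; ring
  unfold wd
  rw [show (fun w => g (u w)) = g ∘ u from rfl, hcomp]
  simp only [ContinuousLinearMap.coe_comp', Function.comp_apply,
    ContinuousLinearMap.coe_restrictScalars', e]
  ring

/-- chain rule, inner holomorphic -/
lemma wd_comp_inner {g u : ℂ → ℂ} {z : ℂ} (hu : DifferentiableAt ℝ u (g z))
    (hg : DifferentiableAt ℂ g z) :
    wd (fun w => u (g w)) z = wd u (g z) * deriv g z := by
  have hgr : HasFDerivAt g ((fderiv ℂ g z).restrictScalars ℝ) z :=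
    hg.hasFDerivAt.restrictScalars ℝ
  have hcomp := (hu.hasFDerivAt.comp z hgr).fderiv
  have e : ∀ v : ℂ, fderiv ℂ g z v = deriv g z * v := by
    intro v
    have e1 : fderiv ℂ g z 1 = deriv g z := by rw [← toSpanSingleton_deriv]; simp
    calc fderiv ℂ g z v = fderiv ℂ g z (v • (1:ℂ)) := by rw [smul_eq_mul, mul_one]
    _ = v • fderiv ℂ g z 1 := map_smul _ _ _
    _ = deriv g z * v := by rw [e1, smul_eq_mul]; ring
  set D := fderiv ℝ u (g z) with hD
  set a := deriv g z with ha
  have hsplit : ∀ b : ℂ, D b = (b.re : ℂ) * D 1 + (b.im : ℂ) * D I := by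
    intro b
    have hb : b = b.re • (1:ℂ) + b.im • (I:ℂ) := by
      rw [Complex.real_smul, Complex.real_smul, mul_one, Complex.re_add_im]
    conv_lhs => rw [hb]
    rw [map_add, map_smul, map_smul]
    simp [Complex.real_smul]
  unfold wd
  rw [show (fun w => u (g w)) = u ∘ g from rfl, hcomp]
  simp only [ContinuousLinearMap.coe_comp', Function.comp_apply,
    ContinuousLinearMap.coe_restrictScalars', e, ← hD]
  rw [hsplit (a * 1), hsplit (a * I)]
  simp only [mul_one]
  have hre : ((a*I).re : ℂ) = -(a.im : ℂ) := by simp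
  have him : ((a*I).im : ℂ) = (a.re : ℂ) := by simp
  rw [hre, him]
  have haa : a = (a.re : ℂ) + (a.im : ℂ) * I := (Complex.re_add_im a).symm
  have h3 : (I:ℂ)*I = -1 := by simp [Complex.I_mul_I]
  linear_combination ((1/2) * (a.im:ℂ) * D I) * h3 - ((1/2) * (D 1 - I * D I)) * haa

noncomputable def pwd1 (F : ℂ × ℂ → ℂ) (p : ℂ × ℂ) : ℂ :=
  (1/2 : ℂ) * (fderiv ℝ F p (1, 0) - Complex.I * fderiv ℝ F p (Complex.I, 0))

noncomputable def pwd2 (F : ℂ × ℂ → ℂ) (p : ℂ × ℂ) : ℂ :=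
  (1/2 : ℂ) * (fderiv ℝ F p (0, 1) - Complex.I * fderiv ℝ F p (0, Complex.I))

lemma slice1 {F : ℂ × ℂ → ℂ} {ε z : ℂ} (h : DifferentiableAt ℝ F (ε, z)) :
    wd (fun e => F (e, z)) ε = pwd1 F (ε, z) := by
  have hι : HasFDerivAt (fun e : ℂ => (e, z)) (ContinuousLinearMap.inl ℝ ℂ ℂ) ε :=
    hasFDerivAt_prodMk_left ε z
  have hc := (h.hasFDerivAt.comp ε hι).fderiv
  unfold wd pwd1
  rw [show (fun e => F (e, z)) = F ∘ (fun e => (e, z)) from rfl, hc]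
  simp

lemma slice2 {F : ℂ × ℂ → ℂ} {ε z : ℂ} (h : DifferentiableAt ℝ F (ε, z)) :
    wd (fun w => F (ε, w)) z = pwd2 F (ε, z) := by
  have hι : HasFDerivAt (fun w : ℂ => (ε, w)) (ContinuousLinearMap.inr ℝ ℂ ℂ) z :=
    hasFDerivAt_prodMk_right ε z
  have hc := (h.hasFDerivAt.comp z hι).fderiv
  unfold wd pwd2
  rw [show (fun w => F (ε, w)) = F ∘ (fun w => (ε, w)) from rfl, hc]
  simp

lemma pwd1_contDiff {F : ℂ × ℂ → ℂ} (h : ContDiff ℝ (⊤ : ℕ∞) F) : ContDiff ℝ (⊤ : ℕ∞) (pwd1 F) := by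
  have hG : ContDiff ℝ (⊤ : ℕ∞) (fderiv ℝ F) := h.fderiv_right (by simp)
  exact contDiff_const.mul (((hG.clm_apply contDiff_const).sub
    (contDiff_const.mul (hG.clm_apply contDiff_const))))

lemma pwd2_contDiff {F : ℂ × ℂ → ℂ} (h : ContDiff ℝ (⊤ : ℕ∞) F) : ContDiff ℝ (⊤ : ℕ∞) (pwd2 F) := by
  have hG : ContDiff ℝ (⊤ : ℕ∞) (fderiv ℝ F) := h.fderiv_right (by simp)
  exact contDiff_const.mul (((hG.clm_apply contDiff_const).sub
    (contDiff_const.mul (hG.clm_apply contDiff_const))))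

lemma fderiv_app_const {F : ℂ × ℂ → ℂ} (h : ContDiff ℝ (⊤ : ℕ∞) F) (p : ℂ × ℂ) (v : ℂ × ℂ) :
    fderiv ℝ (fun q => fderiv ℝ F q v) p = (fderiv ℝ (fderiv ℝ F) p).flip v := by
  have hG : ContDiff ℝ (⊤ : ℕ∞) (fderiv ℝ F) := h.fderiv_right (by simp)
  rw [fderiv_clm_apply (hG.differentiable (by simp) p) (differentiableAt_const _)]
  simp

lemma fderiv_pwd2_apply {F : ℂ × ℂ → ℂ} (h : ContDiff ℝ (⊤ : ℕ∞) F) (p : ℂ × ℂ) (u : ℂ × ℂ) :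
    fderiv ℝ (pwd2 F) p u
      = (1/2 : ℂ) * (fderiv ℝ (fderiv ℝ F) p u (0, 1)
          - Complex.I * fderiv ℝ (fderiv ℝ F) p u (0, Complex.I)) := by
  have hG : ContDiff ℝ (⊤ : ℕ∞) (fderiv ℝ F) := h.fderiv_right (by simp)
  have hA : DifferentiableAt ℝ (fun q => fderiv ℝ F q ((0:ℂ), (1:ℂ))) p :=
    ((hG.clm_apply contDiff_const).differentiable (by simp)) p
  have hB : DifferentiableAt ℝ (fun q => fderiv ℝ F q ((0:ℂ), Complex.I)) p :=
    ((hG.clm_apply contDiff_const).differentiable (by simp)) p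
  unfold pwd2
  rw [fderiv_const_mul ((hA.fun_sub (hB.const_mul _))) _]
  rw [fderiv_fun_sub hA (hB.const_mul _)]
  rw [fderiv_const_mul hB]
  rw [fderiv_app_const h p _, fderiv_app_const h p _]
  simp

lemma fderiv_pwd1_apply {F : ℂ × ℂ → ℂ} (h : ContDiff ℝ (⊤ : ℕ∞) F) (p : ℂ × ℂ) (u : ℂ × ℂ) :
    fderiv ℝ (pwd1 F) p u
      = (1/2 : ℂ) * (fderiv ℝ (fderiv ℝ F) p u (1, 0)
          - Complex.I * fderiv ℝ (fderiv ℝ F) p u (Complex.I, 0)) := by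
  have hG : ContDiff ℝ (⊤ : ℕ∞) (fderiv ℝ F) := h.fderiv_right (by simp)
  have hA : DifferentiableAt ℝ (fun q => fderiv ℝ F q ((1:ℂ), (0:ℂ))) p :=
    ((hG.clm_apply contDiff_const).differentiable (by simp)) p
  have hB : DifferentiableAt ℝ (fun q => fderiv ℝ F q (Complex.I, (0:ℂ))) p :=
    ((hG.clm_apply contDiff_const).differentiable (by simp)) p
  unfold pwd1
  rw [fderiv_const_mul ((hA.fun_sub (hB.const_mul _))) _]
  rw [fderiv_fun_sub hA (hB.const_mul _)]
  rw [fderiv_const_mul hB]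
  rw [fderiv_app_const h p _, fderiv_app_const h p _]
  simp

lemma pwd_swap {F : ℂ × ℂ → ℂ} (h : ContDiff ℝ (⊤ : ℕ∞) F) (p : ℂ × ℂ) :
    pwd1 (pwd2 F) p = pwd2 (pwd1 F) p := by
  have hsymm : IsSymmSndFDerivAt ℝ F p :=
    (h.contDiffAt).isSymmSndFDerivAt (by rw [minSmoothness_of_isRCLikeNormedField]; exact WithTop.coe_le_coe.mpr le_top)
  have L : pwd1 (pwd2 F) p = (1/2:ℂ) * (fderiv ℝ (pwd2 F) p (1,0)
      - Complex.I * fderiv ℝ (pwd2 F) p (Complex.I,0)) := rfl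
  have R : pwd2 (pwd1 F) p = (1/2:ℂ) * (fderiv ℝ (pwd1 F) p (0,1)
      - Complex.I * fderiv ℝ (pwd1 F) p (0,Complex.I)) := rfl
  rw [L, R, fderiv_pwd2_apply h, fderiv_pwd2_apply h, fderiv_pwd1_apply h, fderiv_pwd1_apply h]
  rw [hsymm (1,0) (0,1), hsymm (I,0) (0,1), hsymm (1,0) (0,I), hsymm (I,0) (0,I)]
  ring


lemma AnalyticAt.deriv' {f : ℂ → ℂ} {z : ℂ} (h : AnalyticAt ℂ f z) :
    AnalyticAt ℂ (deriv f) z := by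
  obtain ⟨s, hs, hos⟩ := h.exists_mem_nhds_analyticOnNhd
  exact hos.deriv z (mem_of_mem_nhds hs)

/-- with `c(γ^ε)` the lower-left entry of the normalized matrix of
`γ^ε = f^ε∘γ∘(f^ε)^{−1}` (encoded via a branch `q` of `((γ^ε)')^{1/2}` along `f^ε`
by `q² = (γ^ε)'∘f^ε` and `(γ^ε)''∘f^ε = −2c(γ^ε) q³`), provided `c(γ) ≠ 0`:
`ċ(γ)/c(γ) = ((ḟ_{zz}∘γ)γ' − ḟ_{zz})/(γ''/γ') − (1/2)(ḟ_z∘γ + ḟ_z)`. -/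
theorem variation_of_c_gamma
    (Ω V : Set ℂ) (hΩ : IsOpen Ω) (hV : IsOpen V)
    (γ : ℂ → ℂ) (hmaps : Set.MapsTo γ Ω Ω)
    (hγ : ∀ z ∈ Ω, AnalyticAt ℂ γ z) (hγ' : ∀ z ∈ Ω, deriv γ z ≠ 0)
    (f : ℂ → ℂ → ℂ) (γe : ℂ → ℂ → ℂ)
    (hf : ContDiff ℝ (⊤ : ℕ∞) (fun p : ℂ × ℂ => f p.1 p.2))
    (hf0 : f 0 = id)
    (hhol : ∀ z ε₀ : ℂ, DifferentiableAt ℂ (fun ε => f ε z) ε₀)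
    (hg0 : γe 0 = γ)
    (hmemV : ∀ ε : ℂ, ∀ z ∈ Ω, f ε z ∈ V)
    (hγe : ContDiffOn ℝ (⊤ : ℕ∞) (fun p : ℂ × ℂ => γe p.1 p.2) (Set.univ ×ˢ V))
    (hγez : ∀ ε : ℂ, ∀ w ∈ V, AnalyticAt ℂ (γe ε) w)
    (hrel : ∀ ε : ℂ, ∀ z ∈ Ω, f ε (γ z) = γe ε (f ε z))
    (c : ℂ → ℂ) (q : ℂ → ℂ → ℂ)
    (hc : ContDiff ℝ (⊤ : ℕ∞) c) (hq : ContDiff ℝ (⊤ : ℕ∞) (fun p : ℂ × ℂ => q p.1 p.2))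
    (hc0 : c 0 ≠ 0)
    (hsqrt : ∀ ε : ℂ, ∀ z ∈ Ω, (q ε z)^2 = deriv (γe ε) (f ε z))
    (hnorm : ∀ ε : ℂ, ∀ z ∈ Ω,
      deriv (deriv (γe ε)) (f ε z) = -2 * c ε * (q ε z)^3) :
    ∀ z ∈ Ω,
      wd c 0 / c 0
        = (wd (fun w => wd (fun v => wd (fun ε => f ε v) 0) w) (γ z) * deriv γ z
            - wd (fun w => wd (fun v => wd (fun ε => f ε v) 0) w) z)
            / (deriv (deriv γ) z / deriv γ z)
          - (1/2) * (wd (fun w => wd (fun ε => f ε w) 0) (γ z)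
              + wd (fun w => wd (fun ε => f ε w) 0) z) := by
  intro z hz
  have hFc : ContDiff ℝ (⊤ : ℕ∞) (fun p : ℂ × ℂ => f p.1 p.2) := hf
  set F : ℂ × ℂ → ℂ := fun p => f p.1 p.2 with hFdef
  have hFd : ∀ p : ℂ × ℂ, DifferentiableAt ℝ F p := fun p => hFc.differentiable (by simp) p
  have hP1 : ContDiff ℝ (⊤ : ℕ∞) (pwd1 F) := pwd1_contDiff hFc
  have hP2 : ContDiff ℝ (⊤ : ℕ∞) (pwd2 F) := pwd2_contDiff hFc
  have hP22 : ContDiff ℝ (⊤ : ℕ∞) (pwd2 (pwd2 F)) := pwd2_contDiff hP2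
  have hdiff_slice2 : ∀ (G : ℂ × ℂ → ℂ), ContDiff ℝ (⊤ : ℕ∞) G → ∀ (ε₀ w : ℂ),
      DifferentiableAt ℝ (fun w' => G (ε₀, w')) w := fun G hG ε₀ w =>
    ((hG.differentiable (by simp)) _).comp w ((differentiableAt_const ε₀).prodMk differentiableAt_id)
  have hdiff_slice1 : ∀ (G : ℂ × ℂ → ℂ), ContDiff ℝ (⊤ : ℕ∞) G → ∀ (w ε₀ : ℂ),
      DifferentiableAt ℝ (fun ε => G (ε, w)) ε₀ := fun G hG w ε₀ =>
    ((hG.differentiable (by simp)) _).comp ε₀ (differentiableAt_id.prodMk (differentiableAt_const w))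
  -- slices of f
  have hfz : ∀ ε w : ℂ, wd (f ε) w = pwd2 F (ε, w) := fun ε w => slice2 (hFd (ε, w))
  have hfdiff : ∀ ε w : ℂ, DifferentiableAt ℝ (f ε) w := fun ε w =>
    hdiff_slice2 F hFc ε w
  have hfε : ∀ w : ℂ, wd (fun ε => f ε w) 0 = pwd1 F (0, w) := fun w => slice1 (hFd (0, w))
  have hfdz : ∀ w : ℂ, wd (fun w' => wd (fun ε => f ε w') 0) w = pwd2 (pwd1 F) (0, w) := by
    intro w
    rw [show (fun w' => wd (fun ε => f ε w') 0) = (fun w' => pwd1 F (0, w')) from funext hfε]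
    exact slice2 ((hP1.differentiable (by simp)) _)
  have hfdzz : ∀ w : ℂ, wd (fun w' => wd (fun v => wd (fun ε => f ε v) 0) w') w
      = pwd2 (pwd2 (pwd1 F)) (0, w) := by
    intro w
    rw [show (fun w' => wd (fun v => wd (fun ε => f ε v) 0) w')
        = (fun w' => pwd2 (pwd1 F) (0, w')) from funext hfdz]
    exact slice2 (((pwd2_contDiff hP1).differentiable (by simp)) _)
  -- values at ε = 0
  have hb10 : ∀ w : ℂ, pwd2 F (0, w) = 1 := by
    intro w
    rw [← slice2 (hFd (0, w))]
    have h0 : (fun w' => F (0, w')) = fun w' => w' := by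
      funext w'
      show f 0 w' = w'
      rw [hf0]; rfl
    rw [h0]
    exact wd_id w
  have hb20 : ∀ w : ℂ, pwd2 (pwd2 F) (0, w) = 0 := by
    intro w
    rw [← slice2 ((hP2.differentiable (by simp)) (0, w))]
    rw [show (fun w' => pwd2 F (0, w')) = fun _ => (1:ℂ) from funext hb10]
    exact wd_const 1 w
  -- basic constants
  have hgz : γ z ∈ Ω := hmaps hz
  have hf0z : ∀ w : ℂ, f 0 w = w := by intro w; rw [hf0]; rfl
  have hd0 : deriv γ z ≠ 0 := hγ' z hz
  have hQ0 : (q 0 z)^2 = deriv γ z := by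
    have h1 := hsqrt 0 z hz
    rw [hg0, hf0z] at h1
    exact h1
  have he : deriv (deriv γ) z = -2 * c 0 * (q 0 z)^3 := by
    have h1 := hnorm 0 z hz
    rw [hg0, hf0z] at h1
    exact h1
  have hQ0ne : q 0 z ≠ 0 := by
    intro h
    apply hd0
    rw [← hQ0, h]; ring
  -- equation (A) for all ε, on Ω
  have hA : ∀ ε : ℂ, ∀ w ∈ Ω,
      pwd2 F (ε, γ w) * deriv γ w = deriv (γe ε) (f ε w) * pwd2 F (ε, w) := by
    intro ε w hw
    have h1 : wd (fun w' => f ε (γ w')) w = wd (f ε) (γ w) * deriv γ w :=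
      wd_comp_inner (hfdiff ε (γ w)) (hγ w hw).differentiableAt
    have h2 : wd (fun w' => γe ε (f ε w')) w = deriv (γe ε) (f ε w) * wd (f ε) w :=
      wd_comp_outer (hγez ε _ (hmemV ε w hw)).differentiableAt (hfdiff ε w)
    have h3 : wd (fun w' => f ε (γ w')) w = wd (fun w' => γe ε (f ε w')) w :=
      wd_congr (Filter.eventuallyEq_of_mem (hΩ.mem_nhds hw) (fun x hx => hrel ε x hx))
    rw [h1, h2, hfz, hfz] at h3
    exact h3
  -- equation (B) for all ε at z
  have hB : ∀ ε : ℂ,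
      pwd2 (pwd2 F) (ε, γ z) * deriv γ z * deriv γ z + pwd2 F (ε, γ z) * deriv (deriv γ) z
        = -2 * c ε * (q ε z)^3 * (pwd2 F (ε, z))^2 + (q ε z)^2 * pwd2 (pwd2 F) (ε, z) := by
    intro ε
    have hu1 : DifferentiableAt ℝ (fun w => pwd2 F (ε, γ w)) z :=
      (hdiff_slice2 (pwd2 F) hP2 ε (γ z)).comp z ((hγ z hz).differentiableAt.restrictScalars ℝ)
    have hu2 : DifferentiableAt ℝ (deriv γ) z :=
      ((hγ z hz).deriv'.differentiableAt).restrictScalars ℝ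
    have hu3 : DifferentiableAt ℝ (fun w => deriv (γe ε) (f ε w)) z :=
      (((hγez ε _ (hmemV ε z hz)).deriv'.differentiableAt).restrictScalars ℝ).comp z (hfdiff ε z)
    have hu4 : DifferentiableAt ℝ (fun w => pwd2 F (ε, w)) z := hdiff_slice2 (pwd2 F) hP2 ε z
    have hL : wd (fun w => pwd2 F (ε, γ w) * deriv γ w) z
        = (pwd2 (pwd2 F) (ε, γ z) * deriv γ z) * deriv γ z
          + pwd2 F (ε, γ z) * deriv (deriv γ) z := by
      rw [wd_mul hu1 hu2]
      have hi : wd (fun w => pwd2 F (ε, γ w)) z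
          = wd (fun w' => pwd2 F (ε, w')) (γ z) * deriv γ z :=
        wd_comp_inner (hdiff_slice2 (pwd2 F) hP2 ε (γ z)) (hγ z hz).differentiableAt
      rw [hi, slice2 ((hP2.differentiable (by simp)) (ε, γ z)),
        wd_holo (hγ z hz).deriv'.differentiableAt]
    have hR : wd (fun w => deriv (γe ε) (f ε w) * pwd2 F (ε, w)) z
        = (-2 * c ε * (q ε z)^3 * pwd2 F (ε, z)) * pwd2 F (ε, z)
          + (q ε z)^2 * pwd2 (pwd2 F) (ε, z) := by
      rw [wd_mul hu3 hu4]
      have ho : wd (fun w => deriv (γe ε) (f ε w)) z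
          = deriv (deriv (γe ε)) (f ε z) * wd (f ε) z :=
        wd_comp_outer (hγez ε _ (hmemV ε z hz)).deriv'.differentiableAt (hfdiff ε z)
      rw [ho, hnorm ε z hz, hfz, ← hsqrt ε z hz,
        slice2 ((hP2.differentiable (by simp)) (ε, z))]
    have h3 : wd (fun w => pwd2 F (ε, γ w) * deriv γ w) z
        = wd (fun w => deriv (γe ε) (f ε w) * pwd2 F (ε, w)) z :=
      wd_congr (Filter.eventuallyEq_of_mem (hΩ.mem_nhds hz) (fun x hx => hA ε x hx))
    rw [hL, hR] at h3
    linear_combination h3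
  -- ε-differentiabilities at 0
  have hqd : DifferentiableAt ℝ (fun ε => q ε z) 0 :=
    hdiff_slice1 (fun p => q p.1 p.2) hq z 0
  have hcd : DifferentiableAt ℝ c 0 := (hc.differentiable (by simp)) 0
  have ha1d : DifferentiableAt ℝ (fun ε => pwd2 F (ε, γ z)) 0 := hdiff_slice1 (pwd2 F) hP2 (γ z) 0
  have hb1d : DifferentiableAt ℝ (fun ε => pwd2 F (ε, z)) 0 := hdiff_slice1 (pwd2 F) hP2 z 0
  have ha2d : DifferentiableAt ℝ (fun ε => pwd2 (pwd2 F) (ε, γ z)) 0 :=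
    hdiff_slice1 (pwd2 (pwd2 F)) hP22 (γ z) 0
  have hb2d : DifferentiableAt ℝ (fun ε => pwd2 (pwd2 F) (ε, z)) 0 :=
    hdiff_slice1 (pwd2 (pwd2 F)) hP22 z 0
  -- identification of ε-derivatives with statement quantities
  have hwa1 : wd (fun ε => pwd2 F (ε, γ z)) 0
      = wd (fun w => wd (fun ε => f ε w) 0) (γ z) := by
    rw [slice1 ((hP2.differentiable (by simp)) (0, γ z)), pwd_swap hFc]
    exact (hfdz (γ z)).symm
  have hwb1 : wd (fun ε => pwd2 F (ε, z)) 0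
      = wd (fun w => wd (fun ε => f ε w) 0) z := by
    rw [slice1 ((hP2.differentiable (by simp)) (0, z)), pwd_swap hFc]
    exact (hfdz z).symm
  have hwa2 : wd (fun ε => pwd2 (pwd2 F) (ε, γ z)) 0
      = wd (fun w => wd (fun v => wd (fun ε => f ε v) 0) w) (γ z) := by
    rw [slice1 ((hP22.differentiable (by simp)) (0, γ z)), pwd_swap hP2,
      show pwd1 (pwd2 F) = pwd2 (pwd1 F) from funext (pwd_swap hFc)]
    exact (hfdzz (γ z)).symm
  have hwb2 : wd (fun ε => pwd2 (pwd2 F) (ε, z)) 0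
      = wd (fun w => wd (fun v => wd (fun ε => f ε v) 0) w) z := by
    rw [slice1 ((hP22.differentiable (by simp)) (0, z)), pwd_swap hP2,
      show pwd1 (pwd2 F) = pwd2 (pwd1 F) from funext (pwd_swap hFc)]
    exact (hfdzz z).symm
  set A1 := wd (fun w => wd (fun ε => f ε w) 0) (γ z) with hA1def
  set B1 := wd (fun w => wd (fun ε => f ε w) 0) z with hB1def
  set A2 := wd (fun w => wd (fun v => wd (fun ε => f ε v) 0) w) (γ z) with hA2def
  set B2 := wd (fun w => wd (fun v => wd (fun ε => f ε v) 0) w) z with hB2def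
  set Qd := wd (fun ε => q ε z) 0 with hQddef
  set cd := wd c 0 with hcddef
  set Q0 := q 0 z with hQ0def
  set c0 := c 0 with hc0def
  -- differentiate (A) in ε at 0
  have hE1fun : (fun ε => pwd2 F (ε, γ z) * deriv γ z)
      = (fun ε => q ε z * q ε z * pwd2 F (ε, z)) := by
    funext ε
    have h1 := hA ε z hz
    rw [← hsqrt ε z hz] at h1
    linear_combination h1
  have hE1 : A1 * deriv γ z = (Qd * Q0 + Q0 * Qd) * 1 + Q0 * Q0 * B1 := by
    have hL : wd (fun ε => pwd2 F (ε, γ z) * deriv γ z) 0 = A1 * deriv γ z := by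
      rw [wd_mul ha1d (differentiableAt_const _), wd_const, hwa1]
      ring
    have hR : wd (fun ε => q ε z * q ε z * pwd2 F (ε, z)) 0
        = (Qd * Q0 + Q0 * Qd) * 1 + Q0 * Q0 * B1 := by
      rw [wd_mul (hqd.fun_mul hqd) hb1d, wd_mul hqd hqd, hb10, hwb1]
    rw [← hL, ← hR, hE1fun]
  -- differentiate (B) in ε at 0
  have hE2fun : (fun ε => pwd2 (pwd2 F) (ε, γ z) * (deriv γ z * deriv γ z)
        + pwd2 F (ε, γ z) * deriv (deriv γ) z)
      = (fun ε => (-2) * c ε * (q ε z * (q ε z * q ε z)) * (pwd2 F (ε, z) * pwd2 F (ε, z))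
        + q ε z * q ε z * pwd2 (pwd2 F) (ε, z)) := by
    funext ε
    have h1 := hB ε
    linear_combination h1
  have hE2 : A2 * (deriv γ z * deriv γ z) + A1 * deriv (deriv γ) z
      = ((-2) * cd * (Q0 * (Q0 * Q0)) + (-2) * c0 * (Qd * (Q0 * Q0) + Q0 * (Qd * Q0 + Q0 * Qd)))
          * (1 * 1)
        + (-2) * c0 * (Q0 * (Q0 * Q0)) * (B1 * 1 + 1 * B1)
        + ((Qd * Q0 + Q0 * Qd) * 0 + Q0 * Q0 * B2) := by
    have hL : wd (fun ε => pwd2 (pwd2 F) (ε, γ z) * (deriv γ z * deriv γ z)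
        + pwd2 F (ε, γ z) * deriv (deriv γ) z) 0
        = A2 * (deriv γ z * deriv γ z) + A1 * deriv (deriv γ) z := by
      rw [wd_add (ha2d.fun_mul (differentiableAt_const _)) (ha1d.fun_mul (differentiableAt_const _)),
        wd_mul ha2d (differentiableAt_const _), wd_mul ha1d (differentiableAt_const _),
        wd_const, wd_const, hwa2, hwa1]
      ring
    have hR : wd (fun ε => (-2) * c ε * (q ε z * (q ε z * q ε z))
          * (pwd2 F (ε, z) * pwd2 F (ε, z))
        + q ε z * q ε z * pwd2 (pwd2 F) (ε, z)) 0
        = ((-2) * cd * (Q0 * (Q0 * Q0)) + (-2) * c0 * (Qd * (Q0 * Q0) + Q0 * (Qd * Q0 + Q0 * Qd)))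
            * (1 * 1)
          + (-2) * c0 * (Q0 * (Q0 * Q0)) * (B1 * 1 + 1 * B1)
          + ((Qd * Q0 + Q0 * Qd) * 0 + Q0 * Q0 * B2) := by
      have d1 : DifferentiableAt ℝ (fun ε => (-2 : ℂ) * c ε) 0 := hcd.const_mul _
      have d2 : DifferentiableAt ℝ (fun ε => q ε z * (q ε z * q ε z)) 0 := hqd.mul (hqd.mul hqd)
      have d3 : DifferentiableAt ℝ (fun ε => pwd2 F (ε, z) * pwd2 F (ε, z)) 0 := hb1d.mul hb1d
      rw [wd_add ((d1.fun_mul d2).fun_mul d3) ((hqd.fun_mul hqd).fun_mul hb2d),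
        wd_mul (d1.fun_mul d2) d3, wd_mul d1 d2, wd_mul (differentiableAt_const _) hcd,
        wd_mul hqd (hqd.fun_mul hqd), wd_mul hqd hqd,
        wd_mul hb1d hb1d,
        wd_mul (hqd.fun_mul hqd) hb2d, wd_mul hqd hqd,
        wd_const, hb10, hb20, hwb1, hwb2]
      ring
    rw [← hL, ← hR, hE2fun]
  -- final algebra
  have hdQ : deriv γ z = Q0^2 := hQ0.symm
  rw [hdQ] at hE1 hE2 ⊢
  rw [he] at hE2 ⊢
  have key : 2*Q0^3*cd = -(A2*Q0^2 - B2)*Q0^2 - c0*Q0^3*(A1+B1) := by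
    linear_combination hE2 + (3*c0*Q0) * hE1
  have hden : (-2*c0*Q0^3) / (Q0^2) = -2*(c0*Q0) := by
    field_simp
  rw [hden]
  have hc0Q : (-2:ℂ)*(c0*Q0) ≠ 0 := by
    simp [hc0, hQ0ne]
  have h2Q0ne : (2:ℂ)*Q0^3 ≠ 0 := by simp [hQ0ne]
  calc cd / c0 = (2*Q0^3*cd) / (2*Q0^3*c0) := by
        rw [mul_div_mul_left _ _ h2Q0ne]
    _ = (-(A2*Q0^2 - B2)*Q0^2 - c0*Q0^3*(A1+B1)) / (2*Q0^3*c0) := by rw [key]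
    _ = (A2 * Q0 ^ 2 - B2) / (-2 * (c0 * Q0)) - 1 / 2 * (A1 + B1) := by
        field_simp
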